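/- Let N be a pure Petri net and let x, y ∈ C(N) be configurations of N. Then x →_N y if and only if x ≤ y and every multiset Z with x ≤ Z ≤ y is a configuration of N. -/
import Mathlib


/-- A Petri net `⟨S,T,F,I⟩`: `pre s t = F(s,t)`, `post t s = F(t,s)`,
`init = I` is the initial marking. -/
structure PetriNet (S T : Type*) where
  pre : S → T → ℕ
  post : T → S → ℕ
  init : S → ℕ

/-- `•U(s) = Σ_t F(s,t)·U(t)` for a multiset `U` of transitions. -/
noncomputable def preMS {S T : Type*} (N : PetriNet S T) (U : T → ℕ) (s : S) : ℕ :=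
  ∑ᶠ t, N.pre s t * U t

/-- `U•(s) = Σ_t U(t)·F(t,s)` for a multiset `U` of transitions. -/
noncomputable def postMS {S T : Type*} (N : PetriNet S T) (U : T → ℕ) (s : S) : ℕ :=
  ∑ᶠ t, U t * N.post t s

/-- `M_X = I − •X + X•`, computed in `ℤ`. -/
noncomputable def marking {S T : Type*} (N : PetriNet S T) (x : T → ℕ) (s : S) : ℤ :=
  (N.init s : ℤ) - (preMS N x s : ℤ) + (postMS N x s : ℤ)

/-- A (finite) configuration of `N`: a finite multiset `x` of transitions
with `M_x = I − •x + x• ≥ 0`. -/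
def IsConfig {S T : Type*} (N : PetriNet S T) (x : T → ℕ) : Prop :=
  (Function.support x).Finite ∧ ∀ s, 0 ≤ marking N x s

/-- `N` is pure: no place `s` and transition `t` with `F(s,t) > 0` and `F(t,s) > 0`. -/
def PurePN {S T : Type*} (N : PetriNet S T) : Prop :=
  ∀ s t, ¬(0 < N.pre s t ∧ 0 < N.post t s)

/-- The step transition relation on configurations: `x →_N y` iff `x ≤ y` and
`M_x →^{y−x} M_y`, i.e. `y − x` is enabled under `M_x` (`•(y−x) ≤ M_x`) and
firing it yields `M_y = M_x − •(y−x) + (y−x)•`. -/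
def StepPN {S T : Type*} (N : PetriNet S T) (x y : T → ℕ) : Prop :=
  x ≤ y ∧
  (∀ s, (preMS N (fun t => y t - x t) s : ℤ) ≤ marking N x s) ∧
  (∀ s, marking N y s =
      marking N x s - (preMS N (fun t => y t - x t) s : ℤ)
        + (postMS N (fun t => y t - x t) s : ℤ))

section Aux

variable {S T : Type*} (N : PetriNet S T)

lemma pre_support_sub (s : S) (U : T → ℕ) :
    Function.support (fun t => N.pre s t * U t) ⊆ Function.support U := by
  intro t ht
  simp only [Function.mem_support] at *
  intro h; exact ht (by simp [h])

lemma post_support_sub (s : S) (U : T → ℕ) :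
    Function.support (fun t => U t * N.post t s) ⊆ Function.support U := by
  intro t ht
  simp only [Function.mem_support] at *
  intro h; exact ht (by simp [h])

lemma preMS_add (s : S) (U V : T → ℕ) (hU : (Function.support U).Finite)
    (hV : (Function.support V).Finite) :
    preMS N (fun t => U t + V t) s = preMS N U s + preMS N V s := by
  unfold preMS
  simp only [mul_add]
  exact finsum_add_distrib (hU.subset (pre_support_sub N s U))
    (hV.subset (pre_support_sub N s V))

lemma postMS_add (s : S) (U V : T → ℕ) (hU : (Function.support U).Finite)
    (hV : (Function.support V).Finite) :
    postMS N (fun t => U t + V t) s = postMS N U s + postMS N V s := by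
  unfold postMS
  simp only [add_mul]
  exact finsum_add_distrib (hU.subset (post_support_sub N s U))
    (hV.subset (post_support_sub N s V))

lemma support_sub_of_le {U V : T → ℕ} (h : U ≤ V) :
    Function.support U ⊆ Function.support V := by
  intro t ht
  simp only [Function.mem_support] at *
  have h2 : U t ≤ V t := h t
  omega

lemma support_diff_sub (U V : T → ℕ) :
    Function.support (fun t => V t - U t) ⊆ Function.support V := by
  intro t ht
  simp only [Function.mem_support] at *
  omega

lemma preMS_split (s : S) {U V : T → ℕ} (h : U ≤ V)
    (hV : (Function.support V).Finite) :
    preMS N V s = preMS N U s + preMS N (fun t => V t - U t) s := by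
  have hU : (Function.support U).Finite := hV.subset (support_sub_of_le h)
  have hD : (Function.support (fun t => V t - U t)).Finite :=
    hV.subset (support_diff_sub U V)
  have h1 : preMS N V s = preMS N (fun t => U t + (V t - U t)) s := by
    unfold preMS; congr 1; funext t
    have h2 : U t ≤ V t := h t
    simp [Nat.add_sub_cancel' h2]
  exact h1.trans (preMS_add N s U (fun t => V t - U t) hU hD)

lemma postMS_split (s : S) {U V : T → ℕ} (h : U ≤ V)
    (hV : (Function.support V).Finite) :
    postMS N V s = postMS N U s + postMS N (fun t => V t - U t) s := by
  have hU : (Function.support U).Finite := hV.subset (support_sub_of_le h)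
  have hD : (Function.support (fun t => V t - U t)).Finite :=
    hV.subset (support_diff_sub U V)
  have h1 : postMS N V s = postMS N (fun t => U t + (V t - U t)) s := by
    unfold postMS; congr 1; funext t
    have h2 : U t ≤ V t := h t
    simp [Nat.add_sub_cancel' h2]
  exact h1.trans (postMS_add N s U (fun t => V t - U t) hU hD)

/-- The marking identity holds automatically whenever `x ≤ y` and `y` has
finite support. -/
lemma marking_split (s : S) {u v : T → ℕ} (h : u ≤ v)
    (hv : (Function.support v).Finite) :
    marking N v s = marking N u s - (preMS N (fun t => v t - u t) s : ℤ)
        + (postMS N (fun t => v t - u t) s : ℤ) := by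
  unfold marking
  rw [preMS_split N s h hv, postMS_split N s h hv]
  push_cast
  ring

end Aux

/-- In a pure net, `x →_N y` iff `x ≤ y` and every multiset `Z` with
`x ≤ Z ≤ y` is a configuration of `N`. -/
theorem stmt_4 {S T : Type*} (N : PetriNet S T) (hpure : PurePN N)
    (x y : T → ℕ) (hx : IsConfig N x) (hy : IsConfig N y) :
    StepPN N x y ↔ (x ≤ y ∧ ∀ Z : T → ℕ, x ≤ Z → Z ≤ y → IsConfig N Z) := by
  obtain ⟨hyfin, hymark⟩ := hy
  obtain ⟨hxfin, hxmark⟩ := hx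
  constructor
  · rintro ⟨hle, henab, -⟩
    refine ⟨hle, fun Z hxZ hZy => ?_⟩
    have hZfin : (Function.support Z).Finite := hyfin.subset (fun t ht => by
      simp only [Function.mem_support] at *
      have h2 : Z t ≤ y t := hZy t
      omega)
    refine ⟨hZfin, fun s => ?_⟩
    rw [marking_split N s hxZ hZfin]
    have hmono : preMS N (fun t => Z t - x t) s ≤ preMS N (fun t => y t - x t) s := by
      have : (fun t => y t - x t) = fun t => (Z t - x t) + (y t - Z t) := by
        funext t
        have h1 : x t ≤ Z t := hxZ t
        have h2 : Z t ≤ y t := hZy t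
        omega
      rw [this, preMS_add N s _ _ (hZfin.subset (support_diff_sub x Z))
        (hyfin.subset (support_diff_sub Z y))]
      exact Nat.le_add_right _ _
    have := henab s
    have : (preMS N (fun t => Z t - x t) s : ℤ) ≤ marking N x s := by
      refine le_trans ?_ this
      exact_mod_cast hmono
    have hpost : (0:ℤ) ≤ (postMS N (fun t => Z t - x t) s : ℤ) := by positivity
    linarith
  · rintro ⟨hle, hall⟩
    refine ⟨hle, fun s => ?_, fun s => marking_split N s hle hyfin⟩
    -- choose Z picking only transitions consuming from s
    set Z : T → ℕ := fun t => if 0 < N.pre s t then y t else x t with hZdef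
    have hxZ : x ≤ Z := fun t => by
      simp only [hZdef]; split <;> [exact hle t; exact le_refl _]
    have hZy : Z ≤ y := fun t => by
      simp only [hZdef]; split <;> [exact le_refl _; exact hle t]
    obtain ⟨hZfin, hZmark⟩ := hall Z hxZ hZy
    have hM := marking_split N s hxZ hZfin
    -- preMS of (Z - x) at s equals preMS of (y - x) at s
    have hpre : preMS N (fun t => Z t - x t) s = preMS N (fun t => y t - x t) s := by
      unfold preMS
      congr 1; funext t
      simp only [hZdef]
      by_cases h : 0 < N.pre s t
      · simp [h]
      · have : N.pre s t = 0 := by omega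
        simp [this]
    -- postMS of (Z - x) at s is zero, by purity
    have hpost : postMS N (fun t => Z t - x t) s = 0 := by
      unfold postMS
      have : ∀ t, (Z t - x t) * N.post t s = 0 := by
        intro t
        by_cases h : 0 < N.pre s t
        · have : N.post t s = 0 := by
            by_contra hc
            exact hpure s t ⟨h, by omega⟩
          simp [this]
        · simp [hZdef, h]
      simp only [this]
      exact finsum_zero
    rw [hpre, hpost] at hM
    have := hZmark s
    rw [hM] at this
    push_cast at this ⊢
    linarith
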